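/- arXiv:1905.13477 — 4 statements merged into one kernel-verified Lean document; each statement's English description precedes it below -/
import Mathlib

section
/- Let B be a closed ball in ℝ^d and let f be a measurable function supported in B that belongs to L log log L(B). Then the Hardy–Littlewood maximal function M(f) belongs to L_Ψ(B), i.e. ∫_B Ψ(x, M(f)(x)) dx < ∞. -/
open MeasureTheory Metric Real ENNReal NNReal

/-- `log⁺ u = max (log u) 0`. -/
noncomputable def logPlus (u : ℝ) : ℝ := max (Real.log u) 0

/-- `Ψ(x,t) = t / (log(e+t) + log(e+|x|))`. -/
noncomputable def PsiFun {d : ℕ} (x : EuclideanSpace ℝ (Fin d)) (t : ℝ) : ℝ :=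
  t / (Real.log (Real.exp 1 + t) + Real.log (Real.exp 1 + ‖x‖))

/-- The Hardy–Littlewood maximal function. -/
noncomputable def HLMax {d : ℕ} (f : EuclideanSpace ℝ (Fin d) → ℂ)
    (x : EuclideanSpace ℝ (Fin d)) : ℝ≥0∞ :=
  ⨆ (r : ℝ) (_ : 0 < r),
    (volume (Metric.ball x r))⁻¹ * ∫⁻ y in Metric.ball x r, (‖f y‖₊ : ℝ≥0∞)

/-!
Since `Ψ(x, t) ≤ t / log(e + t) ≤ ∫₀ᵗ ds / log(e + s)`, the layer-cake formula reduces the claim to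
`∫₀^∞ |{x ∈ B : Mf(x) ≥ t}| dt / log(e + t) < ∞`. The range `t ≤ 2` contributes at most `2|B|`.
For `t > 2` we have `Mf ≤ M(f · 1_{|f| ≥ t/2}) + t/2`, so the weak type (1,1) bound for `M`
(a Vitali covering argument) gives `t |{Mf ≥ t}| ≲ ∫_{|f| ≥ t/2} |f|`. By Tonelli the remaining
integral is `≲ ∫ |f(y)| ∫₂^{2|f(y)|} dt / (t log(e + t)) dy ≲ ∫ |f| (1 + log⁺ log⁺ |f|)`.
-/

open Set

lemma logPlus_eq_posLog : logPlus = log⁺ := funext fun _ ↦ max_comm _ _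

lemma one_le_log_exp_one_add {t : ℝ} (ht : 0 ≤ t) : 1 ≤ Real.log (exp 1 + t) := by
  rw [le_log_iff_exp_le (by positivity)]
  linarith

lemma intervalIntegrable_inv_log_exp_one_add {T : ℝ} (hT : 0 ≤ T) :
    IntervalIntegrable (fun t ↦ (Real.log (exp 1 + t))⁻¹) volume 0 T := by
  refine ContinuousOn.intervalIntegrable_of_Icc hT <| ContinuousOn.inv₀
    (ContinuousOn.log (by fun_prop) fun t ht ↦ ?_) fun t ht ↦ ?_
  · have := ht.1
    positivity
  · exact (zero_lt_one.trans_le (one_le_log_exp_one_add ht.1)).ne'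

lemma psiFun_le_intervalIntegral {d : ℕ} (x : EuclideanSpace ℝ (Fin d)) {t : ℝ} (ht : 0 ≤ t) :
    PsiFun x t ≤ ∫ s in 0..t, (Real.log (exp 1 + s))⁻¹ := by
  have hlog_t := one_le_log_exp_one_add ht
  have hlog_x := one_le_log_exp_one_add (norm_nonneg x)
  calc PsiFun x t ≤ t / Real.log (exp 1 + t) :=
        div_le_div_of_nonneg_left ht (by linarith) (by linarith)
    _ = ∫ _ in 0..t, (Real.log (exp 1 + t))⁻¹ := by simp [div_eq_mul_inv]
    _ ≤ ∫ s in 0..t, (Real.log (exp 1 + s))⁻¹ := by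
        refine intervalIntegral.integral_mono_on ht intervalIntegrable_const
          (intervalIntegrable_inv_log_exp_one_add ht) fun s ⟨hs₀, hst⟩ ↦ ?_
        have hlog_s := one_le_log_exp_one_add hs₀
        gcongr

lemma hasDerivAt_log_log_exp_one_add {t : ℝ} (ht : 0 ≤ t) :
    HasDerivAt (fun s ↦ Real.log (Real.log (exp 1 + s)))
      ((exp 1 + t) * Real.log (exp 1 + t))⁻¹ t := by
  have h := (((hasDerivAt_id t).const_add (exp 1)).log (by positivity)).log
    (one_le_log_exp_one_add ht |>.trans_lt' zero_lt_one).ne'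
  rwa [mul_inv, ← one_div, ← div_eq_mul_inv]

/-- `(t log(e+t))⁻¹ ≤ 3 (log log (e+t))'` on `t ≥ 2`, since `e + t ≤ 3 t` there. -/
lemma setLIntegral_Ioc_two_inv_mul_log_le (M : ℝ) :
    ∫⁻ t in Ioc 2 M, ENNReal.ofReal (t * Real.log (exp 1 + t))⁻¹
      ≤ ENNReal.ofReal (3 * Real.log (Real.log (exp 1 + M))) := by
  set g : ℝ → ℝ := fun s ↦ Real.log (Real.log (exp 1 + s))
  have hg_mono : MonotoneOn g (Ici 0) := fun s (hs : 0 ≤ s) t _ hst ↦ by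
    have := one_le_log_exp_one_add hs
    simp only [g]
    gcongr
  have hg_deriv : ∀ t ∈ Ioc (2 : ℝ) M,
      HasDerivWithinAt g ((exp 1 + t) * Real.log (exp 1 + t))⁻¹ (Ioc 2 M) t :=
    fun t ht ↦ (hasDerivAt_log_log_exp_one_add (by linarith [ht.1])).hasDerivWithinAt
  have hg_image : g '' Ioc 2 M ⊆ Icc (g 2) (g M) := by
    rintro _ ⟨t, ⟨ht2, htM⟩, rfl⟩
    have ht0 : (0 : ℝ) ≤ t := by linarith
    exact ⟨hg_mono (by norm_num : (0 : ℝ) ≤ 2) ht0 ht2.le, hg_mono ht0 (ht0.trans htM) htM⟩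
  calc ∫⁻ t in Ioc 2 M, ENNReal.ofReal (t * Real.log (exp 1 + t))⁻¹
      ≤ ∫⁻ t in Ioc 2 M, 3 * ENNReal.ofReal ((exp 1 + t) * Real.log (exp 1 + t))⁻¹ := by
        refine setLIntegral_mono' measurableSet_Ioc fun t ⟨ht2, _⟩ ↦ ?_
        rw [← ENNReal.ofReal_ofNat 3, ← ENNReal.ofReal_mul (by norm_num)]
        gcongr ENNReal.ofReal ?_
        have := one_le_log_exp_one_add (by linarith : (0 : ℝ) ≤ t)
        have : exp 1 + t ≤ 3 * t := by linarith [exp_one_lt_d9]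
        calc (t * Real.log (exp 1 + t))⁻¹ = 3 * (3 * t * Real.log (exp 1 + t))⁻¹ := by
              field_simp
          _ ≤ 3 * ((exp 1 + t) * Real.log (exp 1 + t))⁻¹ := by gcongr
    _ = 3 * volume (g '' Ioc 2 M) := by
        rw [lintegral_const_mul' _ _ (by simp),
          lintegral_deriv_eq_volume_image_of_monotoneOn measurableSet_Ioc hg_deriv
            (hg_mono.mono fun t ht ↦ (zero_lt_two.trans ht.1).le)]
    _ ≤ 3 * volume (Icc (g 2) (g M)) := by gcongr
    _ ≤ ENNReal.ofReal (3 * g M) := by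
        rw [Real.volume_Icc, ← ENNReal.ofReal_ofNat 3, ← ENNReal.ofReal_mul (by norm_num)]
        gcongr
        exact sub_le_self _ (log_nonneg (one_le_log_exp_one_add zero_le_two))

lemma log_log_exp_one_add_two_mul_le {u : ℝ} (hu : 0 ≤ u) :
    Real.log (Real.log (exp 1 + 2 * u)) ≤ 3 + log⁺ (log⁺ u) := by
  have he : 1 ≤ exp 1 := by linarith [add_one_le_exp 1]
  have hlog : Real.log (exp 1 + 2 * u) ≤ 3 + log⁺ u := by
    calc Real.log (exp 1 + 2 * u) = log⁺ (exp 1 + 2 * u) :=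
          (posLog_eq_log (by rw [abs_of_pos (by positivity)]; linarith)).symm
      _ ≤ Real.log 2 + log⁺ (exp 1) + log⁺ (2 * u) := posLog_add
      _ ≤ Real.log 2 + 1 + (Real.log 2 + log⁺ u) := by
          gcongr
          · rw [posLog_eq_log (by rwa [abs_of_pos (exp_pos 1)]), log_exp]
          · exact_mod_cast posLog_nat_mul (n := 2)
      _ ≤ 3 + log⁺ u := by linarith [log_two_lt_d9]
  calc Real.log (Real.log (exp 1 + 2 * u)) ≤ log⁺ (Real.log (exp 1 + 2 * u)) := le_max_right _ _
    _ ≤ log⁺ (3 + log⁺ u) :=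
        posLog_le_posLog (by linarith [one_le_log_exp_one_add (by positivity : 0 ≤ 2 * u)]) hlog
    _ ≤ Real.log 2 + log⁺ 3 + log⁺ (log⁺ u) := posLog_add
    _ ≤ 3 + log⁺ (log⁺ u) := by
        have : Real.log 3 < 2 := by
          rw [log_lt_iff_lt_exp (by norm_num), show (2 : ℝ) = 1 + 1 by norm_num, exp_add]
          nlinarith [add_one_le_exp 1]
        rw [posLog_eq_log (by norm_num)]
        linarith [log_two_lt_d9]

lemma ofReal_mul_setLIntegral_Ioc_two_le {u : ℝ} (hu : 0 ≤ u) :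
    ENNReal.ofReal u * ∫⁻ t in Ioc 2 (2 * u), ENNReal.ofReal (t * Real.log (exp 1 + t))⁻¹
      ≤ 9 * ENNReal.ofReal u + 3 * ENNReal.ofReal (u * log⁺ (log⁺ u)) := by
  have h_LL : 0 ≤ u * log⁺ (log⁺ u) := mul_nonneg hu posLog_nonneg
  calc _ ≤ ENNReal.ofReal u * ENNReal.ofReal (3 * Real.log (Real.log (exp 1 + 2 * u))) := by
        gcongr
        exact setLIntegral_Ioc_two_inv_mul_log_le _
    _ ≤ ENNReal.ofReal (9 * u + 3 * (u * log⁺ (log⁺ u))) := by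
        rw [← ENNReal.ofReal_mul hu]
        gcongr ENNReal.ofReal ?_
        nlinarith [log_log_exp_one_add_two_mul_le hu]
    _ = 9 * ENNReal.ofReal u + 3 * ENNReal.ofReal (u * log⁺ (log⁺ u)) := by
        rw [ENNReal.ofReal_add (by positivity) (by positivity), ENNReal.ofReal_mul (by norm_num),
          ENNReal.ofReal_mul (by norm_num), ENNReal.ofReal_ofNat, ENNReal.ofReal_ofNat]

lemma setLIntegral_Ioi_mul_lintegral_indicator_eq {α F : Type*} [MeasurableSpace α]
    {μ : Measure α} [SFinite μ] [NormedAddCommGroup F] [MeasurableSpace F]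
    [OpensMeasurableSpace F] {f : α → F} (hf : Measurable f) {w : ℝ → ℝ≥0∞} (hw : Measurable w)
    (a : ℝ) :
    ∫⁻ t in Ioi a, w t * ∫⁻ y, {y | t / 2 ≤ ‖f y‖}.indicator (‖f ·‖ₑ) y ∂μ
      = ∫⁻ y, ‖f y‖ₑ * (∫⁻ t in Ioc a (2 * ‖f y‖), w t) ∂μ := by
  have h_meas : Measurable fun p : ℝ × α ↦
      w p.1 * {y | p.1 / 2 ≤ ‖f y‖}.indicator (‖f ·‖ₑ) p.2 :=
    (hw.comp measurable_fst).mul <| (hf.comp measurable_snd).enorm.indicator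
      (measurableSet_le (by fun_prop) (hf.comp measurable_snd).norm)
  have h_inner : ∀ y, ∫⁻ t in Ioi a, w t * {y | t / 2 ≤ ‖f y‖}.indicator (‖f ·‖ₑ) y
      = ‖f y‖ₑ * ∫⁻ t in Ioc a (2 * ‖f y‖), w t := fun y ↦ by
    have : ∀ t, w t * {y | t / 2 ≤ ‖f y‖}.indicator (‖f ·‖ₑ) y
        = (Iic (2 * ‖f y‖)).indicator (fun t ↦ ‖f y‖ₑ * w t) t := fun t ↦ by
      by_cases h : t / 2 ≤ ‖f y‖
      · rw [indicator_of_mem (show y ∈ {y | t / 2 ≤ ‖f y‖} from h),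
          indicator_of_mem (show t ∈ Iic (2 * ‖f y‖) from show t ≤ _ by linarith), mul_comm]
      · rw [indicator_of_notMem (show y ∉ {y | t / 2 ≤ ‖f y‖} from h),
          indicator_of_notMem (show t ∉ Iic (2 * ‖f y‖) from show ¬ t ≤ _ by linarith), mul_zero]
    rw [lintegral_congr this, lintegral_indicator measurableSet_Iic,
      Measure.restrict_restrict measurableSet_Iic, inter_comm, Ioi_inter_Iic,
      lintegral_const_mul' _ _ enorm_ne_top]
  have h_ind : ∀ t : ℝ, Measurable ({y | t / 2 ≤ ‖f y‖}.indicator (‖f ·‖ₑ)) :=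
    fun t ↦ hf.enorm.indicator (measurableSet_le measurable_const hf.norm)
  rw [lintegral_congr fun t ↦ (lintegral_const_mul _ (h_ind t)).symm,
    lintegral_lintegral_swap h_meas.aemeasurable]
  exact lintegral_congr h_inner

section MaximalFunction

variable {X F : Type*} [PseudoMetricSpace X] [MeasurableSpace X] [NormedAddCommGroup F]

noncomputable def maximalFunction (μ : Measure X) (f : X → F) (x : X) : ℝ≥0∞ :=
  ⨆ (r : ℝ) (_ : 0 < r), (μ (ball x r))⁻¹ * ∫⁻ y in ball x r, ‖f y‖ₑ ∂μ

lemma HLMax_eq_maximalFunction {d : ℕ} (f : EuclideanSpace ℝ (Fin d) → ℂ) :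
    HLMax f = maximalFunction volume f := rfl

variable (μ : Measure X)

lemma ballAverage_le_maximalFunction (f : X → F) {x : X} {r : ℝ} (hr : 0 < r) :
    (μ (ball x r))⁻¹ * ∫⁻ y in ball x r, ‖f y‖ₑ ∂μ ≤ maximalFunction μ f x :=
  le_iSup₂ (f := fun r (_ : 0 < r) ↦ (μ (ball x r))⁻¹ * ∫⁻ y in ball x r, ‖f y‖ₑ ∂μ) r hr

lemma maximalFunction_le_indicator_add (f : X → F) (c : ℝ) (x : X) :
    maximalFunction μ f x
      ≤ maximalFunction μ ({y | c ≤ ‖f y‖}.indicator f) x + ENNReal.ofReal c := by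
  set g := {y | c ≤ ‖f y‖}.indicator f
  have hfg : ∀ y, ‖f y‖ₑ ≤ ‖g y‖ₑ + ENNReal.ofReal c := fun y ↦ by
    by_cases h : c ≤ ‖f y‖
    · simp [g, indicator_of_mem (show y ∈ {y | c ≤ ‖f y‖} from h)]
    · simp only [g, indicator_of_notMem (show y ∉ {y | c ≤ ‖f y‖} from h), enorm_zero, zero_add]
      rw [← ofReal_norm]
      exact ENNReal.ofReal_le_ofReal (not_le.1 h).le
  refine iSup₂_le fun r hr ↦ ?_
  set B := ball x r
  calc (μ B)⁻¹ * ∫⁻ y in B, ‖f y‖ₑ ∂μ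
      ≤ (μ B)⁻¹ * ∫⁻ y in B, ‖g y‖ₑ + ENNReal.ofReal c ∂μ := by gcongr with y; exact hfg y
    _ = (μ B)⁻¹ * ∫⁻ y in B, ‖g y‖ₑ ∂μ + ENNReal.ofReal c * ((μ B)⁻¹ * μ B) := by
        rw [lintegral_add_right _ measurable_const, setLIntegral_const]
        ring
    _ ≤ maximalFunction μ g x + ENNReal.ofReal c * 1 := by
        gcongr
        · exact ballAverage_le_maximalFunction μ g hr
        · exact ENNReal.inv_mul_le_one _
    _ = maximalFunction μ g x + ENNReal.ofReal c := by rw [mul_one]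

variable [OpensMeasurableSpace X]

/-- Balls grow continuously from below, so rational radii suffice. -/
lemma maximalFunction_eq_iSup_rat (f : X → F) (x : X) :
    maximalFunction μ f x
      = ⨆ (q : ℚ) (_ : 0 < (q : ℝ)), (μ (ball x q))⁻¹ * ∫⁻ y in ball x q, ‖f y‖ₑ ∂μ := by
  refine le_antisymm (iSup₂_le fun r hr ↦ ?_)
    (iSup₂_le fun q hq ↦ ballAverage_le_maximalFunction μ f hq)
  set ν := μ.withDensity (‖f ·‖ₑ)
  have hν : ∀ s, ∫⁻ y in ball x s, ‖f y‖ₑ ∂μ = ν (ball x s) :=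
    fun s ↦ (withDensity_apply _ measurableSet_ball).symm
  set t : Set ℚ := {q | 0 < (q : ℝ) ∧ (q : ℝ) < r}
  have hball : ball x r = ⋃ q ∈ t, ball x q := by
    ext y
    simp only [mem_ball, mem_iUnion, exists_prop]
    refine ⟨fun hy ↦ ?_, fun ⟨q, hq, hyq⟩ ↦ hyq.trans hq.2⟩
    obtain ⟨q, hyq, hqr⟩ := exists_rat_btwn hy
    exact ⟨q, ⟨dist_nonneg.trans_lt hyq, hqr⟩, hyq⟩
  have hdir : DirectedOn (Function.onFun (· ⊆ ·) fun q : ℚ ↦ ball x q) t := fun a ha b hb ↦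
    ⟨max a b, by rcases le_total a b with h | h <;> simp [h, ha, hb],
      ball_subset_ball (Rat.cast_le.2 (le_max_left a b)),
      ball_subset_ball (Rat.cast_le.2 (le_max_right a b))⟩
  have hν_ball : ν (ball x r) = ⨆ q ∈ t, ν (ball x q) := by
    rw [hball, measure_biUnion_eq_iSup t.to_countable hdir]
  calc (μ (ball x r))⁻¹ * ∫⁻ y in ball x r, ‖f y‖ₑ ∂μ
      = ⨆ q ∈ t, (μ (ball x r))⁻¹ * ν (ball x q) := by
        rw [hν, hν_ball, ENNReal.mul_iSup]
        simp_rw [ENNReal.mul_iSup]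
    _ ≤ ⨆ (q : ℚ) (_ : 0 < (q : ℝ)), (μ (ball x q))⁻¹ * ∫⁻ y in ball x q, ‖f y‖ₑ ∂μ := by
        refine iSup₂_le fun q hq ↦ le_iSup₂_of_le q hq.1 ?_
        rw [hν]
        gcongr
        exact hq.2.le

variable [SecondCountableTopology X] [SFinite μ]

lemma measurable_setLIntegral_ball {g : X → ℝ≥0∞} (hg : Measurable g) (r : ℝ) :
    Measurable fun x ↦ ∫⁻ y in ball x r, g y ∂μ := by
  simp_rw [← lintegral_indicator measurableSet_ball]
  refine Measurable.lintegral_prod_right'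
    (f := fun p : X × X ↦ {p : X × X | dist p.2 p.1 < r}.indicator (g ∘ Prod.snd) p) ?_
  exact (hg.comp measurable_snd).indicator
    (measurableSet_lt (measurable_dist.comp (measurable_snd.prodMk measurable_fst))
      measurable_const)

lemma measurable_maximalFunction [MeasurableSpace F] [OpensMeasurableSpace F] {f : X → F}
    (hf : Measurable f) : Measurable (maximalFunction μ f) := by
  rw [funext (maximalFunction_eq_iSup_rat μ f)]
  refine Measurable.iSup fun q ↦ Measurable.iSup fun _ ↦ Measurable.mul ?_
    (measurable_setLIntegral_ball μ hf.enorm q)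
  have hvol := measurable_setLIntegral_ball μ (g := fun _ ↦ 1) measurable_const q
  simp only [setLIntegral_one] at hvol
  exact hvol.inv

end MaximalFunction

section WeakType

open Module

variable {E F : Type*} [NormedAddCommGroup E] [NormedSpace ℝ E] [FiniteDimensional ℝ E]
  [MeasurableSpace E] [BorelSpace E] (μ : Measure E) [μ.IsAddHaarMeasure] [NormedAddCommGroup F]

lemma mul_measure_setOf_exists_ball_lt_le (ν : Measure E) (l : ℝ≥0∞) (R : ℝ) :
    l * μ {x | ∃ r ∈ Ioc 0 R, l * μ (ball x r) < ν (ball x r)}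
      ≤ 5 ^ finrank ℝ E * ν univ := by
  set S := {x | ∃ r ∈ Ioc 0 R, l * μ (ball x r) < ν (ball x r)}
  choose! r hr hr_lt using fun x (hx : x ∈ S) ↦ hx
  obtain ⟨u, huS, hu_disj, hu_cover⟩ :=
    Vitali.exists_disjoint_subfamily_covering_enlargement_closedBall S id r R
      (fun x hx ↦ (hr x hx).2) 4 (by norm_num)
  have hu_count : u.Countable := hu_disj.countable_of_nonempty_interior fun b hb ↦
    ⟨b, ball_subset_interior_closedBall (mem_ball_self (hr b (huS hb)).1)⟩
  have hS_sub : S ⊆ ⋃ b ∈ u, closedBall b (4 * r b) := fun x hx ↦ by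
    obtain ⟨b, hb, hxb⟩ := hu_cover x hx
    exact mem_biUnion hb (hxb (mem_closedBall_self (hr x hx).1.le))
  have h_ball : ∀ b ∈ u, l * μ (closedBall b (4 * r b)) ≤ 5 ^ finrank ℝ E * ν (ball b (r b)) := by
    intro b hb
    have hrb := (hr b (huS hb)).1
    calc l * μ (closedBall b (4 * r b)) ≤ l * μ (ball b (5 * r b)) := by
          gcongr
          exact closedBall_subset_ball (by linarith)
      _ = 5 ^ finrank ℝ E * (l * μ (ball b (r b))) := by
          rw [Measure.addHaar_ball_mul_of_pos μ b (by norm_num : (0 : ℝ) < 5),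
            ← Measure.addHaar_ball_center μ b, ENNReal.ofReal_pow (by norm_num),
            ENNReal.ofReal_ofNat]
          ring
      _ ≤ 5 ^ finrank ℝ E * ν (ball b (r b)) := by gcongr; exact (hr_lt b (huS hb)).le
  have hu_disj' : u.PairwiseDisjoint fun b ↦ ball b (r b) :=
    hu_disj.mono_on fun b _ ↦ ball_subset_closedBall
  calc l * μ S ≤ l * ∑' b : u, μ (closedBall b (4 * r b)) := by
        gcongr
        exact (measure_mono hS_sub).trans (measure_biUnion_le _ hu_count _)
    _ = ∑' b : u, l * μ (closedBall b (4 * r b)) := ENNReal.tsum_mul_left.symm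
    _ ≤ ∑' b : u, 5 ^ finrank ℝ E * ν (ball b (r b)) :=
        ENNReal.tsum_le_tsum fun b ↦ h_ball b b.2
    _ = 5 ^ finrank ℝ E * ν (⋃ b ∈ u, ball b (r b)) := by
        rw [ENNReal.tsum_mul_left, measure_biUnion hu_count hu_disj' fun _ _ ↦ measurableSet_ball]
    _ ≤ 5 ^ finrank ℝ E * ν univ := by gcongr; exact subset_univ _

lemma mul_measure_lt_maximalFunction_le (l : ℝ≥0∞) (g : E → F) :
    l * μ {x | l < maximalFunction μ g x} ≤ 5 ^ finrank ℝ E * ∫⁻ y, ‖g y‖ₑ ∂μ := by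
  set ν := μ.withDensity (‖g ·‖ₑ)
  -- Vitali's covering lemma needs bounded radii, so exhaust by the radius bound `n`.
  set S : ℕ → Set E := fun n ↦ {x | ∃ r ∈ Ioc 0 (n : ℝ), l * μ (ball x r) < ν (ball x r)}
  have hS_mono : Monotone S := fun m n hmn x ⟨r, hr, hlt⟩ ↦
    ⟨r, Ioc_subset_Ioc_right (Nat.cast_le.2 hmn) hr, hlt⟩
  have h_sub : {x | l < maximalFunction μ g x} ⊆ ⋃ n, S n := fun x hx ↦ by
    obtain ⟨r, hr, hlt⟩ : ∃ r, ∃ (_ : 0 < r), l < (μ (ball x r))⁻¹ * ν (ball x r) := by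
      simpa [maximalFunction, lt_iSup_iff, ν, withDensity_apply _ measurableSet_ball] using hx
    obtain ⟨n, hn⟩ := exists_nat_ge r
    refine mem_iUnion.2 ⟨n, r, ⟨hr, hn⟩, ?_⟩
    rwa [mul_comm, ← div_eq_mul_inv, ENNReal.lt_div_iff_mul_lt
      (Or.inl (measure_ball_pos μ x hr).ne') (Or.inl measure_ball_lt_top.ne)] at hlt
  calc l * μ {x | l < maximalFunction μ g x} ≤ l * μ (⋃ n, S n) := by gcongr
    _ = ⨆ n, l * μ (S n) := by rw [hS_mono.measure_iUnion, ENNReal.mul_iSup]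
    _ ≤ 5 ^ finrank ℝ E * ν univ := iSup_le fun n ↦ mul_measure_setOf_exists_ball_lt_le μ ν l n
    _ = 5 ^ finrank ℝ E * ∫⁻ y, ‖g y‖ₑ ∂μ := by
        rw [withDensity_apply _ MeasurableSet.univ, Measure.restrict_univ]

lemma ofReal_mul_measure_le_maximalFunction_le {t : ℝ} (ht : 0 < t) (f : E → F) :
    ENNReal.ofReal t * μ {x | ENNReal.ofReal t ≤ maximalFunction μ f x}
      ≤ 4 * 5 ^ finrank ℝ E * ∫⁻ y, {y | t / 2 ≤ ‖f y‖}.indicator (‖f ·‖ₑ) y ∂μ := by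
  set g := {y | t / 2 ≤ ‖f y‖}.indicator f
  have h_sub : {x | ENNReal.ofReal t ≤ maximalFunction μ f x}
      ⊆ {x | ENNReal.ofReal (t / 4) < maximalFunction μ g x} := fun x hx ↦ by
    have h := (show ENNReal.ofReal t ≤ _ from hx).trans
      (maximalFunction_le_indicator_add μ f (t / 2) x)
    have h_halves : ENNReal.ofReal t = ENNReal.ofReal (t / 2) + ENNReal.ofReal (t / 2) := by
      rw [← ENNReal.ofReal_add (by positivity) (by positivity), add_halves]
    rw [h_halves] at h
    calc ENNReal.ofReal (t / 4) < ENNReal.ofReal (t / 2) :=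
          (ENNReal.ofReal_lt_ofReal_iff (by positivity)).2 (by linarith)
      _ ≤ maximalFunction μ g x := (ENNReal.add_le_add_iff_right ENNReal.ofReal_ne_top).1 h
  calc ENNReal.ofReal t * μ {x | ENNReal.ofReal t ≤ maximalFunction μ f x}
      = 4 * (ENNReal.ofReal (t / 4) * μ {x | ENNReal.ofReal t ≤ maximalFunction μ f x}) := by
        rw [← mul_assoc, ← ENNReal.ofReal_ofNat 4, ← ENNReal.ofReal_mul (by norm_num)]
        ring_nf
    _ ≤ 4 * (ENNReal.ofReal (t / 4) * μ {x | ENNReal.ofReal (t / 4) < maximalFunction μ g x}) := by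
        gcongr
    _ ≤ 4 * (5 ^ finrank ℝ E * ∫⁻ y, ‖g y‖ₑ ∂μ) := by
        gcongr 4 * ?_
        exact mul_measure_lt_maximalFunction_le μ _ g
    _ = 4 * 5 ^ finrank ℝ E * ∫⁻ y, {y | t / 2 ≤ ‖f y‖}.indicator (‖f ·‖ₑ) y ∂μ := by
        simp only [g, enorm_indicator_eq_indicator_enorm, mul_assoc]

lemma setLIntegral_Ioi_two_measure_le_maximalFunction_lt_top [MeasurableSpace F]
    [OpensMeasurableSpace F] {f : E → F} (hf : Measurable f) (hf_int : HasFiniteIntegral f μ)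
    (hf_LLL : ∫⁻ x, ENNReal.ofReal (‖f x‖ * log⁺ (log⁺ ‖f x‖)) ∂μ < ∞) :
    ∫⁻ t in Ioi 2, μ {x | ENNReal.ofReal t ≤ maximalFunction μ f x}
      * ENNReal.ofReal (Real.log (exp 1 + t))⁻¹ < ∞ := by
  set C : ℝ≥0∞ := 4 * 5 ^ finrank ℝ E
  set w : ℝ → ℝ≥0∞ := fun t ↦ ENNReal.ofReal (t * Real.log (exp 1 + t))⁻¹
  have hw : Measurable w := (measurable_id.mul
    (Real.measurable_log.comp (measurable_const.add measurable_id))).inv.ennreal_ofReal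
  calc ∫⁻ t in Ioi 2, μ {x | ENNReal.ofReal t ≤ maximalFunction μ f x}
        * ENNReal.ofReal (Real.log (exp 1 + t))⁻¹
      ≤ ∫⁻ t in Ioi 2, C * (w t * ∫⁻ y, {y | t / 2 ≤ ‖f y‖}.indicator (‖f ·‖ₑ) y ∂μ) := by
        refine setLIntegral_mono' measurableSet_Ioi fun t (ht : 2 < t) ↦ ?_
        have ht0 : 0 < t := by linarith
        calc μ {x | ENNReal.ofReal t ≤ maximalFunction μ f x}
              * ENNReal.ofReal (Real.log (exp 1 + t))⁻¹
            = ENNReal.ofReal t * μ {x | ENNReal.ofReal t ≤ maximalFunction μ f x} * w t := by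
              rw [mul_comm (ENNReal.ofReal t), mul_assoc, ← ENNReal.ofReal_mul ht0.le, mul_inv,
                ← mul_assoc, mul_inv_cancel₀ ht0.ne', one_mul]
          _ ≤ C * (∫⁻ y, {y | t / 2 ≤ ‖f y‖}.indicator (‖f ·‖ₑ) y ∂μ) * w t := by
              gcongr ?_ * _
              exact ofReal_mul_measure_le_maximalFunction_le μ ht0 f
          _ = _ := by ring
    _ = C * ∫⁻ y, ‖f y‖ₑ * (∫⁻ t in Ioc 2 (2 * ‖f y‖), w t) ∂μ := by
        rw [lintegral_const_mul' _ _ (by finiteness),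
          setLIntegral_Ioi_mul_lintegral_indicator_eq hf hw]
    _ ≤ C * ∫⁻ y, 9 * ‖f y‖ₑ + 3 * ENNReal.ofReal (‖f y‖ * log⁺ (log⁺ ‖f y‖)) ∂μ := by
        gcongr with y
        rw [← ofReal_norm]
        exact ofReal_mul_setLIntegral_Ioc_two_le (norm_nonneg _)
    _ = C * (9 * ∫⁻ y, ‖f y‖ₑ ∂μ + 3 * ∫⁻ y, ENNReal.ofReal (‖f y‖ * log⁺ (log⁺ ‖f y‖)) ∂μ) := by
        rw [lintegral_add_left (hf.enorm.const_mul _), lintegral_const_mul' _ _ (by simp),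
          lintegral_const_mul' _ _ (by simp)]
    _ < ∞ := by
        have := hf_int.ne
        have := hf_LLL.ne
        finiteness

end WeakType

lemma setLIntegral_Ioc_zero_two_measure_mul_lt_top {α : Type*} [MeasurableSpace α]
    (ν : Measure α) [IsFiniteMeasure ν] (s : ℝ → Set α) :
    ∫⁻ t in Ioc 0 2, ν (s t) * ENNReal.ofReal (Real.log (exp 1 + t))⁻¹ < ∞ := by
  calc _ ≤ ∫⁻ t in Ioc 0 2, ν univ := setLIntegral_mono' measurableSet_Ioc fun t ht ↦
        calc _ ≤ ν univ * 1 := mul_le_mul' (measure_mono (subset_univ _))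
              (ENNReal.ofReal_le_one.2 (inv_le_one_of_one_le₀ (one_le_log_exp_one_add ht.1.le)))
          _ = ν univ := mul_one _
    _ = ν univ * volume (Ioc (0 : ℝ) 2) := setLIntegral_const _ _
    _ < ∞ := by
        rw [Real.volume_Ioc]
        finiteness

theorem stein_type_sufficiency_general {d : ℕ} (x₀ : EuclideanSpace ℝ (Fin d)) (r₀ : ℝ)
    (f : EuclideanSpace ℝ (Fin d) → ℂ) (hmeas : Measurable f) (hint : Integrable f)
    (hsupp : ∀ x, x ∉ Metric.closedBall x₀ r₀ → f x = 0)
    (hLLL : ∫⁻ x in Metric.closedBall x₀ r₀,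
      ENNReal.ofReal (‖f x‖ * logPlus (logPlus ‖f x‖)) < ∞) :
    ∫⁻ x in Metric.closedBall x₀ r₀,
      ENNReal.ofReal (PsiFun x ((HLMax f x).toReal)) < ∞ := by
  rw [HLMax_eq_maximalFunction]
  set B := closedBall x₀ r₀
  set M := maximalFunction volume f
  have : IsFiniteMeasure (volume.restrict B) :=
    isFiniteMeasure_restrict.2 measure_closedBall_lt_top.ne
  have hLLL' : ∫⁻ x, ENNReal.ofReal (‖f x‖ * log⁺ (log⁺ ‖f x‖)) < ∞ := by
    rwa [← logPlus_eq_posLog, ← setLIntegral_eq_of_support_subset fun x hx ↦ ?_]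
    by_contra hxB
    simp [hsupp x hxB] at hx
  set L : ℝ → ℝ≥0∞ := fun t ↦
    volume.restrict B {x | t ≤ (M x).toReal} * ENNReal.ofReal (Real.log (exp 1 + t))⁻¹
  have h_large : ∫⁻ t in Ioi 2, L t < ∞ := by
    refine (setLIntegral_mono' measurableSet_Ioi fun t _ ↦ ?_).trans_lt
      (setLIntegral_Ioi_two_measure_le_maximalFunction_lt_top volume hmeas hint.2 hLLL')
    exact mul_le_mul_left ((Measure.restrict_apply_le _ _).trans
      (measure_mono fun x hx ↦ ENNReal.ofReal_le_of_le_toReal hx)) _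
  calc ∫⁻ x in B, ENNReal.ofReal (PsiFun x (M x).toReal)
      ≤ ∫⁻ x in B, ENNReal.ofReal (∫ t in 0..(M x).toReal, (Real.log (exp 1 + t))⁻¹) :=
        lintegral_mono fun x ↦
          ENNReal.ofReal_le_ofReal (psiFun_le_intervalIntegral x toReal_nonneg)
    _ = ∫⁻ t in Ioi 0, L t :=
        lintegral_comp_eq_lintegral_meas_le_mul _ (.of_forall fun _ ↦ toReal_nonneg)
          (measurable_maximalFunction volume hmeas).ennreal_toReal.aemeasurable
          (fun t ht ↦ intervalIntegrable_inv_log_exp_one_add ht.le)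
          ((ae_restrict_iff' measurableSet_Ioi).2 (.of_forall fun t ht ↦
            inv_nonneg.2 (zero_le_one.trans (one_le_log_exp_one_add ht.le))))
    _ = (∫⁻ t in Ioc 0 2, L t) + ∫⁻ t in Ioi 2, L t := by
        rw [← Ioc_union_Ioi_eq_Ioi zero_le_two,
          lintegral_union measurableSet_Ioi (Ioc_disjoint_Ioi le_rfl)]
    _ < ∞ := ENNReal.add_lt_top.2 ⟨setLIntegral_Ioc_zero_two_measure_mul_lt_top _ _, h_large⟩

/-- **Stein-type theorem, sufficiency.** If `f` is supported in a closed ball `B` and belongs to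
`L log log L (B)`, then `M(f) ∈ L_Ψ(B)`. -/
theorem stein_type_sufficiency {d : ℕ} (x₀ : EuclideanSpace ℝ (Fin d)) (r₀ : ℝ) (hr₀ : 0 < r₀)
    (f : EuclideanSpace ℝ (Fin d) → ℂ) (hmeas : Measurable f) (hint : Integrable f)
    (hsupp : ∀ x, x ∉ Metric.closedBall x₀ r₀ → f x = 0)
    (hLLL : ∫⁻ x in Metric.closedBall x₀ r₀,
      ENNReal.ofReal (‖f x‖ * logPlus (logPlus ‖f x‖)) < ∞) :
    ∫⁻ x in Metric.closedBall x₀ r₀,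
      ENNReal.ofReal (PsiFun x ((HLMax f x).toReal)) < ∞ :=
  stein_type_sufficiency_general x₀ r₀ f hmeas hint hsupp hLLL
end

section
/- Let g(s,t) := 1/(log(e+t) + log(e+s)) for s,t ≥ 0 and Ψ(x,t) := t/(log(e+t) + log(e+|x|)). Then for all x ∈ ℝ^d and all t ≥ 0, Ψ(x,t) ≤ ∫_0^t g(|x|,τ) dτ ≤ 2 Ψ(x,t). -/
open MeasureTheory Real

/-- `g(s,t) = 1/(log(e+t) + log(e+s))`. -/
noncomputable def gFun (s t : ℝ) : ℝ :=
  1 / (Real.log (Real.exp 1 + t) + Real.log (Real.exp 1 + s))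

/-!
Since `Ψ(x,t) = t g(|x|,t)` and `g(s,·)` is decreasing, the lower bound is the trivial estimate
of the integral by `t` times the smallest value of the integrand. For the upper bound,
`d/dτ (τ g) = g - τ g² / (e+τ) ≥ g / 2` because `τ / (e+τ) ≤ 1` and `g ≤ 1/2`
(both logarithms are at least `1`), so the integral of `g` is at most `2 t g(|x|,t)`.
-/

lemma one_le_log_exp_one_add_s4 {a : ℝ} (ha : 0 ≤ a) : 1 ≤ log (exp 1 + a) := by
  simpa using log_le_log (exp_pos 1) (le_add_of_nonneg_right ha)

namespace gFun

variable {s τ : ℝ}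

lemma two_le_log_add_log (hs : 0 ≤ s) (hτ : 0 ≤ τ) : 2 ≤ log (exp 1 + τ) + log (exp 1 + s) := by
  linarith [one_le_log_exp_one_add_s4 hs, one_le_log_exp_one_add_s4 hτ]

lemma pos (hs : 0 ≤ s) (hτ : 0 ≤ τ) : 0 < gFun s τ :=
  one_div_pos.2 (by linarith [two_le_log_add_log hs hτ])

lemma le_half (hs : 0 ≤ s) (hτ : 0 ≤ τ) : gFun s τ ≤ 1 / 2 :=
  one_div_le_one_div_of_le two_pos (two_le_log_add_log hs hτ)

lemma antitoneOn (hs : 0 ≤ s) : AntitoneOn (gFun s) (Set.Ici 0) := by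
  intro a ha b _ hab
  refine one_div_le_one_div_of_le (by linarith [two_le_log_add_log hs ha]) ?_
  gcongr
  linarith [exp_pos 1, show (0 : ℝ) ≤ a from ha]

lemma hasDerivAt (hs : 0 ≤ s) (hτ : 0 ≤ τ) :
    HasDerivAt (gFun s) (-(gFun s τ ^ 2 / (exp 1 + τ))) τ := by
  have he : exp 1 + τ ≠ 0 := by positivity
  have hlog : HasDerivAt (fun u => log (exp 1 + u) + log (exp 1 + s)) (1 / (exp 1 + τ)) τ := by
    simpa [one_div] using (((hasDerivAt_id τ).const_add (exp 1)).log he).add_const (log (exp 1 + s))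
  have hD : log (exp 1 + τ) + log (exp 1 + s) ≠ 0 := by linarith [two_le_log_add_log hs hτ]
  have h : HasDerivAt (gFun s) _ τ := (hasDerivAt_const τ (1 : ℝ)).fun_div hlog hD
  convert h using 1
  rw [gFun]
  field_simp
  ring

lemma continuousOn (hs : 0 ≤ s) : ContinuousOn (gFun s) (Set.Ici 0) :=
  fun _ hτ => (hasDerivAt hs hτ).continuousAt.continuousWithinAt

lemma le_two_mul_deriv_id_mul (hs : 0 ≤ s) (hτ : 0 ≤ τ) :
    gFun s τ ≤ 2 * (gFun s τ + τ * -(gFun s τ ^ 2 / (exp 1 + τ))) := by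
  have hg := (pos hs hτ).le
  have hratio : τ / (exp 1 + τ) ≤ 1 := (div_le_one (by positivity)).2 (by linarith [exp_pos 1])
  have : τ * (gFun s τ ^ 2 / (exp 1 + τ)) ≤ gFun s τ / 2 := calc
    τ * (gFun s τ ^ 2 / (exp 1 + τ)) = τ / (exp 1 + τ) * gFun s τ * gFun s τ := by ring
    _ ≤ 1 * gFun s τ * (1 / 2) := by gcongr; exact le_half hs hτ
    _ = gFun s τ / 2 := by ring
  linarith

lemma mul_le_integral (hs : 0 ≤ s) {t : ℝ} (ht : 0 ≤ t) :
    t * gFun s t ≤ ∫ τ in (0 : ℝ)..t, gFun s τ := by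
  have hIcc : Set.Icc 0 t ⊆ Set.Ici (0 : ℝ) := Set.Icc_subset_Ici_self
  have := intervalIntegral.integral_mono_on ht (intervalIntegrable_const (μ := volume))
    ((continuousOn hs).mono hIcc |>.intervalIntegrable_of_Icc ht)
    (fun τ hτ => antitoneOn hs hτ.1 (hIcc ⟨ht, le_rfl⟩) hτ.2)
  simpa using this

lemma integral_le_two_mul (hs : 0 ≤ s) {t : ℝ} (ht : 0 ≤ t) :
    ∫ τ in (0 : ℝ)..t, gFun s τ ≤ 2 * (t * gFun s t) := by
  have hIcc : Set.Icc 0 t ⊆ Set.Ici (0 : ℝ) := Set.Icc_subset_Ici_self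
  have hderiv : ∀ τ ∈ Set.Ici (0 : ℝ), HasDerivAt (fun u => 2 * (u * gFun s u))
      (2 * (gFun s τ + τ * -(gFun s τ ^ 2 / (exp 1 + τ)))) τ := fun τ hτ => by
    simpa using ((hasDerivAt_id τ).mul (hasDerivAt hs hτ)).const_mul 2
  have := intervalIntegral.integral_le_sub_of_hasDeriv_right_of_le ht
    (fun τ hτ => (hderiv τ (hIcc hτ)).continuousAt.continuousWithinAt)
    (fun τ hτ => (hderiv τ (le_of_lt hτ.1)).hasDerivWithinAt)
    ((continuousOn hs).mono hIcc |>.integrableOn_Icc)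
    (fun τ hτ => le_two_mul_deriv_id_mul hs (le_of_lt hτ.1))
  simpa using this

end gFun

lemma PsiFun_eq_mul_gFun {d : ℕ} (x : EuclideanSpace ℝ (Fin d)) (t : ℝ) :
    PsiFun x t = t * gFun ‖x‖ t := by
  rw [PsiFun, gFun, mul_one_div]

/-- For all `x ∈ ℝ^d` and `t ≥ 0`, `Ψ(x,t) ≤ ∫_0^t g(|x|,τ) dτ ≤ 2 Ψ(x,t)`. -/
theorem psi_le_integral_g_le_two_psi {d : ℕ} (x : EuclideanSpace ℝ (Fin d)) (t : ℝ)
    (ht : 0 ≤ t) :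
    PsiFun x t ≤ (∫ τ in (0:ℝ)..t, gFun ‖x‖ τ) ∧
      (∫ τ in (0:ℝ)..t, gFun ‖x‖ τ) ≤ 2 * PsiFun x t := by
  rw [PsiFun_eq_mul_gFun]
  exact ⟨gFun.mul_le_integral (norm_nonneg x) ht, gFun.integral_le_two_mul (norm_nonneg x) ht⟩
end

section
/- Let B = B(x₀, r₀) be a closed ball in ℝ^d and let f be an integrable function supported in B. There exists a constant c₀ > 0, depending only on the dimension d, such that for every x with r₀ < |x − x₀| ≤ 2r₀ one has M(f)(x) ≤ c₀ · M(f)(x₀ + r₀² (x − x₀)/|x − x₀|²). -/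
open MeasureTheory Metric Real ENNReal NNReal

namespace EuclideanGeometry

variable {V P : Type*} [NormedAddCommGroup V] [InnerProductSpace ℝ V] [MetricSpace P]
  [NormedAddTorsor V P]

theorem dist_inversion_right_le {c x : P} {R : ℝ} (hR : 0 ≤ R) (hRx : R ≤ dist x c) :
    dist x (inversion c R x) ≤ 2 * (dist x c - R) := by
  set a := dist x c
  rcases (hR.trans hRx).eq_or_lt with ha | ha
  · obtain rfl : x = c := dist_eq_zero.1 ha.symm
    simp only [a, dist_self, inversion_self] at hRx ⊢
    linarith
  have ht : (R / a) ^ 2 ≤ 1 := pow_le_one₀ (by positivity) ((div_le_one ha).2 hRx)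
  rw [dist_comm, inversion_eq_lineMap, dist_lineMap_right, dist_comm c, Real.norm_eq_abs,
    abs_of_nonneg (sub_nonneg.2 ht), show (1 - (R / a) ^ 2) * a = (a - R) * (a + R) / a by
      field_simp; ring, div_le_iff₀ ha]
  nlinarith

end EuclideanGeometry

section MaximalFunction

variable {d : ℕ} {f : EuclideanSpace ℝ (Fin d) → ℂ}

theorem inv_volume_mul_lintegral_ball_le_HLMax {x : EuclideanSpace ℝ (Fin d)} {r : ℝ}
    (hr : 0 < r) :
    (volume (ball x r))⁻¹ * ∫⁻ z in ball x r, (‖f z‖₊ : ℝ≥0∞) ≤ HLMax f x :=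
  le_iSup₂_of_le r hr le_rfl

theorem inv_volume_mul_lintegral_ball_le_of_subset {x y : EuclideanSpace ℝ (Fin d)} {r k : ℝ}
    (hr : 0 < r) (hk : 0 < k) (hxy : ball x r ⊆ ball y (k * r)) :
    (volume (ball x r))⁻¹ * ∫⁻ z in ball x r, (‖f z‖₊ : ℝ≥0∞) ≤
      ENNReal.ofReal (k ^ d) * HLMax f y := by
  have hvol : volume (ball y (k * r)) = ENNReal.ofReal (k ^ d) * volume (ball x r) := by
    rw [Measure.addHaar_ball_mul_of_pos volume y hk r, Measure.addHaar_ball_center volume x r,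
      finrank_euclideanSpace_fin]
  have hk₀ : ENNReal.ofReal (k ^ d) ≠ 0 := by positivity
  calc (volume (ball x r))⁻¹ * ∫⁻ z in ball x r, (‖f z‖₊ : ℝ≥0∞)
      ≤ (volume (ball x r))⁻¹ * ∫⁻ z in ball y (k * r), (‖f z‖₊ : ℝ≥0∞) := by
        gcongr
    _ = ENNReal.ofReal (k ^ d) *
          ((volume (ball y (k * r)))⁻¹ * ∫⁻ z in ball y (k * r), (‖f z‖₊ : ℝ≥0∞)) := by
        rw [hvol, ENNReal.mul_inv (Or.inl hk₀) (Or.inl ofReal_ne_top), ← mul_assoc, ← mul_assoc,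
          ENNReal.mul_inv_cancel hk₀ ofReal_ne_top, one_mul]
    _ ≤ ENNReal.ofReal (k ^ d) * HLMax f y := by
        gcongr
        exact inv_volume_mul_lintegral_ball_le_HLMax (mul_pos hk hr)

theorem HLMax_le_of_eqOn_zero {x y : EuclideanSpace ℝ (Fin d)} {δ k : ℝ} (hk : 0 ≤ k)
    (hf : Set.EqOn f 0 (ball x δ)) (hxy : dist x y ≤ k * δ) :
    HLMax f x ≤ ENNReal.ofReal ((k + 1) ^ d) * HLMax f y := by
  refine iSup₂_le fun r hr => ?_
  rcases le_or_gt r δ with hrδ | hδr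
  · have hzero : ∫⁻ z in ball x r, (‖f z‖₊ : ℝ≥0∞) = 0 :=
      setLIntegral_eq_zero measurableSet_ball fun z hz => by
        simp [hf (ball_subset_ball hrδ hz)]
    simp [hzero]
  · refine inv_volume_mul_lintegral_ball_le_of_subset hr (by positivity) fun z hz => ?_
    rw [mem_ball] at hz ⊢
    calc dist z y ≤ dist z x + dist x y := dist_triangle z x y
      _ < r + k * r := add_lt_add_of_lt_of_le hz (hxy.trans (by gcongr))
      _ = (k + 1) * r := by ring

end MaximalFunction

/-- **Reflection estimate for the maximal function.** If `f` is supported in the closed ball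
`B = B(x₀,r₀)`, then for `r₀ < |x - x₀| ≤ 2 r₀` one has
`M(f)(x) ≤ c₀ M(f)(x₀ + r₀² (x-x₀)/|x-x₀|²)`, with `c₀` depending only on `d`. -/
theorem maximal_reflection_estimate {d : ℕ} :
    ∃ c₀ : ℝ, 0 < c₀ ∧
      ∀ (x₀ : EuclideanSpace ℝ (Fin d)) (r₀ : ℝ), 0 < r₀ →
      ∀ f : EuclideanSpace ℝ (Fin d) → ℂ, Measurable f → Integrable f →
      (∀ x, x ∉ Metric.closedBall x₀ r₀ → f x = 0) →
      ∀ x : EuclideanSpace ℝ (Fin d), r₀ < ‖x - x₀‖ → ‖x - x₀‖ ≤ 2 * r₀ →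
        HLMax f x ≤ ENNReal.ofReal c₀ *
          HLMax f (x₀ + (r₀ ^ 2 / ‖x - x₀‖ ^ 2) • (x - x₀)) := by
  refine ⟨3 ^ d, by positivity, fun x₀ r₀ hr₀ f _ _ hsupp x hx _ => ?_⟩
  rw [← dist_eq_norm] at hx ⊢
  have hreflect : x₀ + (r₀ ^ 2 / dist x x₀ ^ 2) • (x - x₀) =
      EuclideanGeometry.inversion x₀ r₀ x := by
    rw [EuclideanGeometry.inversion, div_pow, vsub_eq_sub, vadd_eq_add, add_comm]
  have hvanish : Set.EqOn f 0 (ball x (dist x x₀ - r₀)) := fun z hz =>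
    hsupp z fun hz₀ =>
      (closedBall_disjoint_ball (by rw [dist_comm, add_sub_cancel])).ne_of_mem hz₀ hz rfl
  rw [hreflect]
  convert HLMax_le_of_eqOn_zero zero_le_two hvanish
    (EuclideanGeometry.dist_inversion_right_le hr₀.le hx.le) using 3
  norm_num
end

section
/- Let B₀ be the closed unit ball in ℝ^d and Ψ(x,t) := t/(log(e+t)+log(e+|x|)). For δ ∈ (0, e^{−e}) let f_δ := δ^{−d} · χ_{{|x| < δ}}. Then there exist constants c, C > 0 depending only on d such that for every δ ∈ (0, e^{−e}): c · log(log(1/δ)) ≤ ∫_{B₀} |f_δ(x)| log⁺ log⁺ |f_δ(x)| dx ≤ C · log(log(1/δ)) and c · log(log(1/δ)) ≤ ∫_{B₀} Ψ(x, M(f_δ)(x)) dx ≤ C · log(log(1/δ)). -/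
open MeasureTheory Metric Real ENNReal NNReal

/-- `f_δ = δ^{-d} χ_{{|x| < δ}}`. -/
noncomputable def fDelta (d : ℕ) (δ : ℝ) (x : EuclideanSpace ℝ (Fin d)) : ℂ :=
  if ‖x‖ < δ then ((δ : ℂ) ^ d)⁻¹ else 0

/-!
The first integral is computed exactly: `f_δ` equals `δ^{-d}` on `B(0, δ)` and vanishes elsewhere,
so it is `|B₁| · log⁺ log⁺ δ^{-d} = |B₁| (log d + log log (1/δ))`.

For the second, `M f_δ (x) ≤ min (δ^{-d}, 2^d |x|^{-d})` everywhere and `M f_δ (x) ≥ (2|x|)^{-d}`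
once `|x| ≥ δ`. Hence on the dyadic shell `2^{-k-1} < |x| ≤ 2^{-k}`, whose volume is `≍ 2^{-kd}`,
`Ψ(x, M f_δ(x)) ≍ 2^{kd} / (k + 1)`, and the shell contributes `≍ 1 / (k + 1)`. The shells with
`2^{-k} ≳ δ` give a harmonic sum of length `n ≈ log₂ (1/δ)`, i.e. `≍ log n ≍ log log (1/δ)`, while
the ball `|x| ≤ 2^{-n} < 2δ` contributes `O(1)` because `Ψ(x, t) ≤ t ≤ δ^{-d}` there.
-/

lemma one_le_log_exp_add {t : ℝ} (ht : 0 ≤ t) : 1 ≤ Real.log (Real.exp 1 + t) :=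
  (le_log_iff_exp_le (by positivity)).2 (by linarith)

lemma log_exp_add_le {S : ℝ} (hS : 1 ≤ S) : Real.log (Real.exp 1 + S) ≤ Real.log S + 2 := by
  have he : 2 ≤ Real.exp 1 := by linarith [add_one_le_exp 1]
  have hexp2 : Real.exp 2 = Real.exp 1 * Real.exp 1 := by rw [← exp_add]; norm_num
  rw [log_le_iff_le_exp (by positivity), exp_add, exp_log (by positivity), hexp2]
  nlinarith [mul_le_mul_of_nonneg_right hS (show 0 ≤ Real.exp 1 * Real.exp 1 - 1 by nlinarith)]

lemma monotoneOn_div_log_exp_add_add {A : ℝ} (hA : 0 ≤ A) :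
    MonotoneOn (fun t => t / (Real.log (Real.exp 1 + t) + A)) (Set.Ici 0) := by
  intro t (ht : 0 ≤ t) T (hT : 0 ≤ T) htT
  have ha := one_le_log_exp_add ht
  have hb := one_le_log_exp_add hT
  -- `log (e + ·)` grows by at most `(T - t) / (e + t)` on `[t, T]`, and `t / (e + t) ≤ 1`
  have hgrowth : t * (Real.log (Real.exp 1 + T) - Real.log (Real.exp 1 + t)) ≤ T - t := by
    rw [← log_div (by positivity) (by positivity)]
    calc t * Real.log ((Real.exp 1 + T) / (Real.exp 1 + t))
        ≤ t * ((Real.exp 1 + T) / (Real.exp 1 + t) - 1) :=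
          mul_le_mul_of_nonneg_left (log_le_sub_one_of_pos (by positivity)) ht
      _ ≤ T - t := by
          rw [div_sub_one (by positivity), mul_div_assoc', div_le_iff₀ (by positivity)]
          nlinarith [Real.exp_pos 1]
  dsimp only
  rw [div_le_div_iff₀ (by linarith) (by linarith)]
  nlinarith

lemma monotoneOn_psiFun {d : ℕ} (x : EuclideanSpace ℝ (Fin d)) :
    MonotoneOn (PsiFun x) (Set.Ici 0) :=
  monotoneOn_div_log_exp_add_add (by linarith [one_le_log_exp_add (norm_nonneg x)])

lemma psiFun_le_self {d : ℕ} (x : EuclideanSpace ℝ (Fin d)) {t : ℝ} (ht : 0 ≤ t) :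
    PsiFun x t ≤ t :=
  div_le_self ht (by linarith [one_le_log_exp_add ht, one_le_log_exp_add (norm_nonneg x)])

lemma psiFun_le_div_log {d : ℕ} (x : EuclideanSpace ℝ (Fin d)) {t : ℝ} (ht : 1 < t) :
    PsiFun x t ≤ t / Real.log t := by
  refine div_le_div_of_nonneg_left (by linarith) (log_pos ht) ?_
  have := log_le_log (by linarith) (show t ≤ Real.exp 1 + t by linarith [Real.exp_pos 1])
  linarith [one_le_log_exp_add (norm_nonneg x)]

lemma div_le_psiFun {d : ℕ} {x : EuclideanSpace ℝ (Fin d)} (hx : ‖x‖ ≤ 1) {s S : ℝ}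
    (hs : 0 ≤ s) (hsS : s ≤ S) (hS : 1 ≤ S) : s / (2 * (Real.log S + 2)) ≤ PsiFun x s := by
  have h₁ : Real.log (Real.exp 1 + s) ≤ Real.log (Real.exp 1 + S) :=
    log_le_log (by positivity) (by linarith)
  have h₂ : Real.log (Real.exp 1 + ‖x‖) ≤ Real.log (Real.exp 1 + S) :=
    log_le_log (by positivity) (by linarith)
  refine div_le_div_of_nonneg_left hs ?_ ?_
  · linarith [one_le_log_exp_add hs, one_le_log_exp_add (norm_nonneg x)]
  · linarith [log_exp_add_le hS]

lemma lintegral_eq_add_sum_sdiff {α : Type*} [MeasurableSpace α] (μ : Measure α)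
    (f : α → ℝ≥0∞) {s : ℕ → Set α} (hs : Antitone s) (hms : ∀ k, MeasurableSet (s k))
    (n : ℕ) :
    ∫⁻ x in s 0, f x ∂μ
      = ∫⁻ x in s n, f x ∂μ + ∑ k ∈ Finset.range n, ∫⁻ x in s k \ s (k + 1), f x ∂μ := by
  induction n with
  | zero => simp
  | succ n ih =>
    rw [ih, Finset.sum_range_succ, ← lintegral_inter_add_sdiff f (s n) (hms (n + 1)),
      Set.inter_eq_right.2 (hs n.le_succ)]
    ring

lemma addHaar_closedBall_sdiff_closedBall {E : Type*} [NormedAddCommGroup E]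
    [NormedSpace ℝ E] [MeasurableSpace E] [BorelSpace E] [FiniteDimensional ℝ E]
    (μ : Measure E) [μ.IsAddHaarMeasure] (x : E) {r R : ℝ} (hr : 0 ≤ r) (hrR : r ≤ R) :
    μ (closedBall x R \ closedBall x r)
      = ENNReal.ofReal (R ^ Module.finrank ℝ E - r ^ Module.finrank ℝ E) * μ (ball 0 1) := by
  rw [measure_sdiff (closedBall_subset_closedBall hrR) measurableSet_closedBall.nullMeasurableSet
      measure_closedBall_lt_top.ne, Measure.addHaar_closedBall μ x (hr.trans hrR),
    Measure.addHaar_closedBall μ x hr, ← ENNReal.sub_mul (fun _ _ => measure_ball_lt_top.ne),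
    ENNReal.ofReal_sub _ (by positivity)]

section MaximalFunction

variable {d : ℕ}

lemma inv_volume_ball_mul_volume_ball_one (x : EuclideanSpace ℝ (Fin d)) {r : ℝ} (hr : 0 < r) :
    (volume (ball x r))⁻¹ * volume (ball (0 : EuclideanSpace ℝ (Fin d)) 1)
      = ENNReal.ofReal (r ^ d)⁻¹ := by
  have hv₀ := (measure_ball_pos volume (0 : EuclideanSpace ℝ (Fin d)) one_pos).ne'
  have hv := (measure_ball_lt_top (μ := volume) (x := (0 : EuclideanSpace ℝ (Fin d))) (r := 1)).ne
  rw [Measure.addHaar_ball_of_pos _ _ hr, finrank_euclideanSpace_fin,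
    ENNReal.mul_inv (Or.inr hv) (Or.inr hv₀), mul_assoc, ENNReal.inv_mul_cancel hv₀ hv, mul_one,
    ENNReal.ofReal_inv_of_pos (by positivity)]

variable (f : EuclideanSpace ℝ (Fin d) → ℂ) (x : EuclideanSpace ℝ (Fin d))

lemma average_le_hlMax {r : ℝ} (hr : 0 < r) :
    (volume (ball x r))⁻¹ * ∫⁻ y in ball x r, ‖f y‖ₑ ≤ HLMax f x :=
  le_iSup₂ (f := fun (r : ℝ) (_ : 0 < r) =>
    (volume (ball x r))⁻¹ * ∫⁻ y in ball x r, ‖f y‖ₑ) r hr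

lemma hlMax_le_of_enorm_le {M : ℝ≥0∞} (hM : ∀ y, ‖f y‖ₑ ≤ M) : HLMax f x ≤ M := by
  refine iSup₂_le fun r hr => ?_
  have hB₀ := (measure_ball_pos volume x hr).ne'
  calc (volume (ball x r))⁻¹ * ∫⁻ y in ball x r, ‖f y‖ₑ
      ≤ (volume (ball x r))⁻¹ * (M * volume (ball x r)) := by
        gcongr
        exact (lintegral_mono hM).trans_eq (setLIntegral_const _ _)
    _ = M := by
        rw [mul_comm M, ← mul_assoc, ENNReal.inv_mul_cancel hB₀ measure_ball_lt_top.ne, one_mul]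

lemma hlMax_le_of_eqOn_zero {ρ : ℝ} (hf : Set.EqOn f 0 (ball x ρ)) :
    HLMax f x ≤ (volume (ball x ρ))⁻¹ * ∫⁻ y, ‖f y‖ₑ := by
  refine iSup₂_le fun r hr => ?_
  simp only [← enorm_eq_nnnorm]
  rcases le_or_gt r ρ with hrρ | hρr
  · have hzero : ∫⁻ y in ball x r, ‖f y‖ₑ = 0 :=
      setLIntegral_eq_zero measurableSet_ball fun y hy => by
        simp [hf (ball_subset_ball hrρ hy)]
    simp [hzero]
  · exact mul_le_mul' (ENNReal.inv_le_inv.2 (measure_mono (ball_subset_ball hρr.le)))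
      (setLIntegral_le_lintegral _ _)

end MaximalFunction

section Bump

variable {d : ℕ} {δ : ℝ}

lemma norm_fDelta (x : EuclideanSpace ℝ (Fin d)) :
    ‖fDelta d δ x‖ = (ball 0 δ).indicator (fun _ => (δ ^ d)⁻¹) x := by
  by_cases hx : ‖x‖ < δ
  · have hδ : 0 < δ := (norm_nonneg x).trans_lt hx
    rw [Set.indicator_of_mem (mem_ball_zero_iff.2 hx), fDelta, if_pos hx, norm_inv, norm_pow,
      Complex.norm_real, Real.norm_of_nonneg hδ.le]
  · rw [Set.indicator_of_notMem (mt mem_ball_zero_iff.1 hx), fDelta, if_neg hx, norm_zero]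

lemma setLIntegral_comp_norm_fDelta (g : ℝ → ℝ≥0∞) (hg : g 0 = 0)
    (s : Set (EuclideanSpace ℝ (Fin d))) :
    ∫⁻ x in s, g ‖fDelta d δ x‖ = g (δ ^ d)⁻¹ * volume (ball 0 δ ∩ s) := by
  have hpt : ∀ x, g ‖fDelta d δ x‖ = (ball 0 δ).indicator (fun _ => g (δ ^ d)⁻¹) x := fun x => by
    rw [norm_fDelta]
    exact congr_fun (Set.indicator_comp_of_zero hg).symm x
  rw [lintegral_congr hpt, lintegral_indicator_const measurableSet_ball,
    Measure.restrict_apply measurableSet_ball]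

lemma setLIntegral_comp_norm_fDelta_of_subset (g : ℝ → ℝ≥0∞) (hg : g 0 = 0) (hδ : 0 < δ)
    {s : Set (EuclideanSpace ℝ (Fin d))} (hs : ball 0 δ ⊆ s) :
    ∫⁻ x in s, g ‖fDelta d δ x‖
      = g (δ ^ d)⁻¹ * ENNReal.ofReal (δ ^ d) * volume (ball (0 : EuclideanSpace ℝ (Fin d)) 1) := by
  rw [setLIntegral_comp_norm_fDelta g hg, Set.inter_eq_left.2 hs,
    Measure.addHaar_ball_of_pos _ _ hδ, finrank_euclideanSpace_fin, mul_assoc]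

lemma setLIntegral_enorm_fDelta (hδ : 0 < δ) {s : Set (EuclideanSpace ℝ (Fin d))}
    (hs : ball 0 δ ⊆ s) :
    ∫⁻ x in s, ‖fDelta d δ x‖ₑ = volume (ball (0 : EuclideanSpace ℝ (Fin d)) 1) := by
  simp_rw [← ofReal_norm]
  rw [setLIntegral_comp_norm_fDelta_of_subset _ ENNReal.ofReal_zero hδ hs,
    ← ENNReal.ofReal_mul (by positivity), inv_mul_cancel₀ (by positivity), ENNReal.ofReal_one,
    one_mul]

lemma hlMax_fDelta_le (hδ : 0 < δ) (x : EuclideanSpace ℝ (Fin d)) :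
    HLMax (fDelta d δ) x ≤ ENNReal.ofReal (δ ^ d)⁻¹ := by
  refine hlMax_le_of_enorm_le _ _ fun y => ?_
  rw [← ofReal_norm, norm_fDelta]
  exact ENNReal.ofReal_le_ofReal (Set.indicator_le_self' (fun _ _ => by positivity) y)

lemma hlMax_fDelta_ne_top (hδ : 0 < δ) (x : EuclideanSpace ℝ (Fin d)) :
    HLMax (fDelta d δ) x ≠ ⊤ :=
  ne_top_of_le_ne_top ENNReal.ofReal_ne_top (hlMax_fDelta_le hδ x)

lemma toReal_hlMax_fDelta_le (hδ : 0 < δ) (x : EuclideanSpace ℝ (Fin d)) :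
    (HLMax (fDelta d δ) x).toReal ≤ (δ ^ d)⁻¹ :=
  ENNReal.toReal_le_of_le_ofReal (by positivity) (hlMax_fDelta_le hδ x)

lemma toReal_hlMax_fDelta_le_div (hδ : 0 < δ) {x : EuclideanSpace ℝ (Fin d)} (hx : x ≠ 0) :
    (HLMax (fDelta d δ) x).toReal ≤ 2 ^ d / ‖x‖ ^ d := by
  have hx₀ : 0 < ‖x‖ := norm_pos_iff.2 hx
  rcases lt_or_ge ‖x‖ (2 * δ) with hnear | hfar
  · refine (toReal_hlMax_fDelta_le hδ x).trans ?_
    rw [← inv_pow, ← div_pow]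
    gcongr
    rw [inv_eq_one_div, div_le_div_iff₀ hδ hx₀]
    linarith
  · have hvanish : Set.EqOn (fDelta d δ) 0 (ball x (‖x‖ / 2)) := fun y hy => by
      have := norm_sub_norm_le x y
      rw [mem_ball, dist_eq_norm, norm_sub_rev] at hy
      simp only [fDelta, Pi.zero_apply, ite_eq_right_iff]
      intro hyδ
      linarith
    have hle := hlMax_le_of_eqOn_zero _ _ hvanish
    rw [← setLIntegral_univ, setLIntegral_enorm_fDelta hδ (Set.subset_univ _),
      inv_volume_ball_mul_volume_ball_one x (by positivity)] at hle
    refine (ENNReal.toReal_le_of_le_ofReal (by positivity) hle).trans_eq ?_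
    rw [div_pow, inv_div]

lemma inv_pow_le_toReal_hlMax_fDelta (hδ : 0 < δ) {x : EuclideanSpace ℝ (Fin d)}
    (hx : δ ≤ ‖x‖) : ((2 * ‖x‖) ^ d)⁻¹ ≤ (HLMax (fDelta d δ) x).toReal := by
  have hsub : ball 0 δ ⊆ ball x (2 * ‖x‖) := fun y hy => by
    rw [mem_ball_zero_iff] at hy
    rw [mem_ball, dist_eq_norm]
    linarith [norm_sub_le y x]
  have hr : 0 < 2 * ‖x‖ := by linarith
  have hle := average_le_hlMax (fDelta d δ) x hr
  rw [setLIntegral_enorm_fDelta hδ hsub, inv_volume_ball_mul_volume_ball_one x hr] at hle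
  exact (ENNReal.ofReal_le_iff_le_toReal (hlMax_fDelta_ne_top hδ x)).1 hle

end Bump

section DyadicShells

variable {d : ℕ}

def dyadicShell (d k : ℕ) : Set (EuclideanSpace ℝ (Fin d)) :=
  closedBall 0 ((2 : ℝ) ^ k)⁻¹ \ closedBall 0 ((2 : ℝ) ^ (k + 1))⁻¹

lemma mem_dyadicShell {k : ℕ} {x : EuclideanSpace ℝ (Fin d)} :
    x ∈ dyadicShell d k ↔ ‖x‖ ≤ ((2 : ℝ) ^ k)⁻¹ ∧ ((2 : ℝ) ^ (k + 1))⁻¹ < ‖x‖ := by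
  simp [dyadicShell]

lemma measurableSet_dyadicShell (k : ℕ) : MeasurableSet (dyadicShell d k) :=
  measurableSet_closedBall.diff measurableSet_closedBall

lemma lintegral_closedBall_one_eq_add_sum_dyadicShell (f : EuclideanSpace ℝ (Fin d) → ℝ≥0∞)
    (n : ℕ) :
    ∫⁻ x in closedBall 0 1, f x
      = (∫⁻ x in closedBall 0 ((2 : ℝ) ^ n)⁻¹, f x)
        + ∑ k ∈ Finset.range n, ∫⁻ x in dyadicShell d k, f x := by
  have hanti : Antitone fun k : ℕ => closedBall (0 : EuclideanSpace ℝ (Fin d)) ((2 : ℝ) ^ k)⁻¹ :=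
    fun i j hij => closedBall_subset_closedBall
      (inv_anti₀ (by positivity) (pow_le_pow_right₀ one_le_two hij))
  simpa [dyadicShell] using
    lintegral_eq_add_sum_sdiff volume f hanti (fun _ => measurableSet_closedBall) n

lemma volume_dyadicShell (k : ℕ) :
    volume (dyadicShell d k) = ENNReal.ofReal (((2 : ℝ) ^ k)⁻¹ ^ d - ((2 : ℝ) ^ (k + 1))⁻¹ ^ d)
      * volume (ball (0 : EuclideanSpace ℝ (Fin d)) 1) := by
  rw [dyadicShell, addHaar_closedBall_sdiff_closedBall volume 0 (by positivity)
    (inv_anti₀ (by positivity) (pow_le_pow_right₀ one_le_two k.le_succ)),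
    finrank_euclideanSpace_fin]

lemma volume_dyadicShell_le (k : ℕ) :
    volume (dyadicShell d k)
      ≤ ENNReal.ofReal (((2 : ℝ) ^ k)⁻¹ ^ d) * volume (ball (0 : EuclideanSpace ℝ (Fin d)) 1) := by
  rw [volume_dyadicShell]
  gcongr
  exact sub_le_self _ (by positivity)

lemma le_volume_dyadicShell (hd : 0 < d) (k : ℕ) :
    ENNReal.ofReal (((2 : ℝ) ^ k)⁻¹ ^ d / 2) * volume (ball (0 : EuclideanSpace ℝ (Fin d)) 1)
      ≤ volume (dyadicShell d k) := by
  rw [volume_dyadicShell]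
  gcongr
  have h2d : (2 : ℝ) ≤ 2 ^ d := le_self_pow₀ one_le_two hd.ne'
  have hsplit : ((2 : ℝ) ^ (k + 1))⁻¹ ^ d = ((2 : ℝ) ^ k)⁻¹ ^ d / 2 ^ d := by
    rw [pow_succ, mul_inv, mul_pow, inv_pow 2, div_eq_mul_inv]
  have hpos : (0 : ℝ) < ((2 : ℝ) ^ k)⁻¹ ^ d := by positivity
  rw [hsplit]
  have : ((2 : ℝ) ^ k)⁻¹ ^ d / 2 ^ d ≤ ((2 : ℝ) ^ k)⁻¹ ^ d / 2 :=
    div_le_div_of_nonneg_left hpos.le two_pos h2d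
  linarith

end DyadicShells

section ShellEstimates

variable {d : ℕ} {δ : ℝ}

lemma psiFun_hlMax_fDelta_le_of_mem_dyadicShell (hd : 0 < d) (hδ : 0 < δ) {k : ℕ}
    {x : EuclideanSpace ℝ (Fin d)} (hx : x ∈ dyadicShell d k) :
    PsiFun x (HLMax (fDelta d δ) x).toReal ≤ 2 * (4 * 2 ^ k) ^ d / (k + 1) := by
  have hlow := (mem_dyadicShell.1 hx).2
  have hx₀ : 0 < ‖x‖ := lt_of_le_of_lt (by positivity) hlow
  have h2k : (1 : ℝ) ≤ 2 ^ k := one_le_pow₀ one_le_two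
  have hT : 1 < ((4 : ℝ) * 2 ^ k) ^ d := one_lt_pow₀ (by linarith) hd.ne'
  have hMT : (HLMax (fDelta d δ) x).toReal ≤ (4 * 2 ^ k) ^ d :=
    calc (HLMax (fDelta d δ) x).toReal ≤ 2 ^ d / ‖x‖ ^ d :=
          toReal_hlMax_fDelta_le_div hδ (norm_pos_iff.1 hx₀)
      _ = (2 / ‖x‖) ^ d := (div_pow 2 ‖x‖ d).symm
      _ ≤ (4 * 2 ^ k) ^ d := by
          gcongr
          rw [inv_lt_iff_one_lt_mul₀ (by positivity), pow_succ] at hlow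
          rw [div_le_iff₀ hx₀]
          nlinarith
  have hlogT : ((k : ℝ) + 1) / 2 ≤ Real.log ((4 * 2 ^ k) ^ d) := by
    have hlog4 : Real.log 4 = 2 * Real.log 2 := by
      rw [show (4 : ℝ) = 2 ^ 2 by norm_num, Real.log_pow]
      norm_num
    have hd₁ : (1 : ℝ) ≤ d := by exact_mod_cast hd
    have h₁ : ((k : ℝ) + 1) / 2 ≤ (2 + k) * Real.log 2 := by
      nlinarith [Real.log_two_gt_d9, (k.cast_nonneg : (0 : ℝ) ≤ k)]
    have h₂ : (2 + k) * Real.log 2 ≤ d * ((2 + k) * Real.log 2) :=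
      le_mul_of_one_le_left (by positivity) hd₁
    rw [Real.log_pow, Real.log_mul (by norm_num) (by positivity), Real.log_pow, hlog4]
    linarith
  calc PsiFun x (HLMax (fDelta d δ) x).toReal
      ≤ PsiFun x ((4 * 2 ^ k) ^ d) :=
        monotoneOn_psiFun x ENNReal.toReal_nonneg (Set.mem_Ici.2 (by positivity)) hMT
    _ ≤ (4 * 2 ^ k) ^ d / Real.log ((4 * 2 ^ k) ^ d) := psiFun_le_div_log x hT
    _ ≤ (4 * 2 ^ k) ^ d / (((k : ℝ) + 1) / 2) :=
        div_le_div_of_nonneg_left (by positivity) (by positivity) hlogT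
    _ = 2 * (4 * 2 ^ k) ^ d / (k + 1) := by field_simp

lemma le_psiFun_hlMax_fDelta_of_mem_dyadicShell (hd : 0 < d) (hδ : 0 < δ) {k : ℕ}
    (hδk : δ ≤ ((2 : ℝ) ^ (k + 1))⁻¹) {x : EuclideanSpace ℝ (Fin d)} (hx : x ∈ dyadicShell d k) :
    (2 ^ k / 2 : ℝ) ^ d / (4 * d * (k + 1)) ≤ PsiFun x (HLMax (fDelta d δ) x).toReal := by
  obtain ⟨hup, hlow⟩ := mem_dyadicShell.1 hx
  have hx₀ : 0 < ‖x‖ := lt_of_le_of_lt (by positivity) hlow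
  have hx₁ : ‖x‖ ≤ 1 := hup.trans (inv_le_one_of_one_le₀ (one_le_pow₀ one_le_two))
  have hS : (1 : ℝ) ≤ (2 ^ k) ^ d := one_le_pow₀ (one_le_pow₀ one_le_two)
  have hsS : (2 ^ k / 2 : ℝ) ^ d ≤ (2 ^ k) ^ d :=
    pow_le_pow_left₀ (by positivity) (div_le_self (by positivity) one_le_two) d
  have hsM : (2 ^ k / 2 : ℝ) ^ d ≤ (HLMax (fDelta d δ) x).toReal := by
    refine le_trans ?_ (inv_pow_le_toReal_hlMax_fDelta hδ (hδk.trans hlow.le))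
    rw [← inv_pow]
    gcongr
    rw [le_inv_comm₀ (by positivity) (by positivity), inv_div, div_eq_mul_inv]
    linarith
  have hlogS : 2 * (Real.log (((2 : ℝ) ^ k) ^ d) + 2) ≤ 4 * d * (k + 1) := by
    have hd₁ : (1 : ℝ) ≤ d := by exact_mod_cast hd
    have h₁ : (k : ℝ) * Real.log 2 ≤ k :=
      mul_le_of_le_one_right k.cast_nonneg (by linarith [Real.log_two_lt_d9])
    have h₂ : (k : ℝ) ≤ d * k := le_mul_of_one_le_left k.cast_nonneg hd₁
    rw [Real.log_pow, Real.log_pow]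
    nlinarith
  calc (2 ^ k / 2 : ℝ) ^ d / (4 * d * (k + 1))
      ≤ (2 ^ k / 2 : ℝ) ^ d / (2 * (Real.log (((2 : ℝ) ^ k) ^ d) + 2)) :=
        div_le_div_of_nonneg_left (by positivity) (by linarith [Real.log_nonneg hS]) hlogS
    _ ≤ PsiFun x ((2 ^ k / 2 : ℝ) ^ d) := div_le_psiFun hx₁ (by positivity) hsS hS
    _ ≤ PsiFun x (HLMax (fDelta d δ) x).toReal :=
        monotoneOn_psiFun x (Set.mem_Ici.2 (by positivity)) ENNReal.toReal_nonneg hsM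

end ShellEstimates

section Scale

variable {δ : ℝ}

lemma exp_one_lt_log_one_div (hδ : 0 < δ) (hδe : δ < Real.exp (-Real.exp 1)) :
    Real.exp 1 < Real.log (1 / δ) := by
  have := Real.log_lt_log hδ hδe
  rw [Real.log_exp] at this
  rw [one_div, Real.log_inv]
  linarith

lemma exists_pow_two_inv_le_lt (hδ : 0 < δ) (hδ1 : δ ≤ 1) :
    ∃ n : ℕ, δ ≤ ((2 : ℝ) ^ n)⁻¹ ∧ ((2 : ℝ) ^ n)⁻¹ < 2 * δ := by
  obtain ⟨n, hle, hlt⟩ := exists_nat_pow_near (one_le_one_div hδ hδ1) one_lt_two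
  refine ⟨n, ?_, ?_⟩
  · rwa [le_inv_comm₀ hδ (by positivity), ← one_div]
  · rw [pow_succ, div_lt_iff₀ hδ] at hlt
    rw [inv_lt_iff_one_lt_mul₀ (by positivity)]
    linarith

lemma log_log_one_div_le_log_add_one (hδ : 0 < δ) (hδ1 : δ < 1) {n : ℕ}
    (hn : ((2 : ℝ) ^ n)⁻¹ < 2 * δ) : Real.log (Real.log (1 / δ)) ≤ Real.log (n + 1) := by
  refine Real.log_le_log (Real.log_pos (one_lt_one_div hδ hδ1)) ?_
  have hlt : 1 / δ < 2 ^ (n + 1) := by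
    rw [inv_lt_iff_one_lt_mul₀ (by positivity)] at hn
    rw [pow_succ, div_lt_iff₀ hδ]
    linarith
  have := Real.log_lt_log (by positivity) hlt
  rw [Real.log_pow] at this
  push_cast at this
  nlinarith [Real.log_two_lt_d9, (n.cast_nonneg : (0 : ℝ) ≤ n)]

lemma harmonic_le_three_mul_log_log_one_div (hδ : 0 < δ) (hL : 1 ≤ Real.log (Real.log (1 / δ)))
    {n : ℕ} (hn : δ ≤ ((2 : ℝ) ^ n)⁻¹) : (harmonic n : ℝ) ≤ 3 * Real.log (Real.log (1 / δ)) := by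
  rcases n.eq_zero_or_pos with rfl | hn₀
  · simp only [harmonic_zero, Rat.cast_zero]
    linarith
  · refine (harmonic_le_one_add_log n).trans ?_
    have hpow : (2 : ℝ) ^ n ≤ 1 / δ := by
      rwa [le_inv_comm₀ hδ (by positivity), ← one_div] at hn
    have hn₁ : (1 : ℝ) ≤ n := by exact_mod_cast hn₀
    have hlog : n * Real.log 2 ≤ Real.log (1 / δ) := by
      rw [← Real.log_pow]
      exact Real.log_le_log (by positivity) hpow
    have hn_le : (n : ℝ) ≤ 2 * Real.log (1 / δ) := by nlinarith [Real.log_two_gt_d9]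
    have := Real.log_le_log (by positivity) hn_le
    rw [Real.log_mul two_ne_zero (by nlinarith [Real.log_two_gt_d9])] at this
    linarith [Real.log_two_lt_d9]

end Scale

lemma sum_range_ofReal_div_add_one {a : ℝ} (ha : 0 ≤ a) (n : ℕ) :
    ∑ k ∈ Finset.range n, ENNReal.ofReal (a / (k + 1)) = ENNReal.ofReal (a * harmonic n) := by
  rw [← ENNReal.ofReal_sum_of_nonneg fun _ _ => by positivity]
  simp [harmonic, Finset.mul_sum, div_eq_mul_inv]

section Integrals

variable {d : ℕ} {δ : ℝ}

lemma setLIntegral_dyadicShell_psiFun_hlMax_fDelta_le (hd : 0 < d) (hδ : 0 < δ) (k : ℕ) :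
    ∫⁻ x in dyadicShell d k, ENNReal.ofReal (PsiFun x (HLMax (fDelta d δ) x).toReal)
      ≤ ENNReal.ofReal (2 * 4 ^ d / (k + 1)) * volume (ball (0 : EuclideanSpace ℝ (Fin d)) 1) :=
  calc _ ≤ ∫⁻ _ in dyadicShell d k, ENNReal.ofReal (2 * (4 * 2 ^ k) ^ d / (k + 1)) :=
        setLIntegral_mono' (measurableSet_dyadicShell k) fun _ hx =>
          ENNReal.ofReal_le_ofReal (psiFun_hlMax_fDelta_le_of_mem_dyadicShell hd hδ hx)
    _ = ENNReal.ofReal (2 * (4 * 2 ^ k) ^ d / (k + 1)) * volume (dyadicShell d k) :=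
        setLIntegral_const _ _
    _ ≤ ENNReal.ofReal (2 * (4 * 2 ^ k) ^ d / (k + 1))
          * (ENNReal.ofReal (((2 : ℝ) ^ k)⁻¹ ^ d)
            * volume (ball (0 : EuclideanSpace ℝ (Fin d)) 1)) := by
        gcongr
        exact volume_dyadicShell_le k
    _ = _ := by
        rw [← mul_assoc, ← ENNReal.ofReal_mul (by positivity), mul_pow, inv_pow]
        congr 2
        field_simp

lemma le_setLIntegral_dyadicShell_psiFun_hlMax_fDelta (hd : 0 < d) (hδ : 0 < δ) {k : ℕ}
    (hδk : δ ≤ ((2 : ℝ) ^ (k + 1))⁻¹) :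
    ENNReal.ofReal ((8 * d * 2 ^ d : ℝ)⁻¹ / (k + 1))
        * volume (ball (0 : EuclideanSpace ℝ (Fin d)) 1)
      ≤ ∫⁻ x in dyadicShell d k, ENNReal.ofReal (PsiFun x (HLMax (fDelta d δ) x).toReal) :=
  calc _ = ENNReal.ofReal ((2 ^ k / 2 : ℝ) ^ d / (4 * d * (k + 1)))
          * (ENNReal.ofReal (((2 : ℝ) ^ k)⁻¹ ^ d / 2)
            * volume (ball (0 : EuclideanSpace ℝ (Fin d)) 1)) := by
        rw [← mul_assoc, ← ENNReal.ofReal_mul (by positivity), div_pow, inv_pow]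
        congr 2
        field_simp
        ring
    _ ≤ ENNReal.ofReal ((2 ^ k / 2 : ℝ) ^ d / (4 * d * (k + 1))) * volume (dyadicShell d k) := by
        gcongr
        exact le_volume_dyadicShell hd k
    _ = ∫⁻ _ in dyadicShell d k, ENNReal.ofReal ((2 ^ k / 2 : ℝ) ^ d / (4 * d * (k + 1))) :=
        (setLIntegral_const _ _).symm
    _ ≤ _ := setLIntegral_mono' (measurableSet_dyadicShell k) fun _ hx =>
          ENNReal.ofReal_le_ofReal (le_psiFun_hlMax_fDelta_of_mem_dyadicShell hd hδ hδk hx)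

lemma setLIntegral_closedBall_psiFun_hlMax_fDelta_le (hδ : 0 < δ) {ρ : ℝ} (hρ : 0 ≤ ρ)
    (hρδ : ρ ≤ 2 * δ) :
    ∫⁻ x in closedBall 0 ρ, ENNReal.ofReal (PsiFun x (HLMax (fDelta d δ) x).toReal)
      ≤ ENNReal.ofReal (2 ^ d) * volume (ball (0 : EuclideanSpace ℝ (Fin d)) 1) :=
  calc _ ≤ ∫⁻ _ in closedBall (0 : EuclideanSpace ℝ (Fin d)) ρ, ENNReal.ofReal (δ ^ d)⁻¹ :=
        lintegral_mono fun x => ENNReal.ofReal_le_ofReal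
          ((psiFun_le_self x ENNReal.toReal_nonneg).trans (toReal_hlMax_fDelta_le hδ x))
    _ = ENNReal.ofReal ((δ ^ d)⁻¹ * ρ ^ d) * volume (ball (0 : EuclideanSpace ℝ (Fin d)) 1) := by
        rw [setLIntegral_const, Measure.addHaar_closedBall _ _ hρ, finrank_euclideanSpace_fin,
          ← mul_assoc, ← ENNReal.ofReal_mul (by positivity)]
    _ ≤ _ := by
        gcongr
        rw [inv_mul_le_iff₀ (by positivity), ← mul_pow]
        exact pow_le_pow_left₀ hρ (by linarith) d

theorem le_lintegral_psiFun_hlMax_fDelta (hd : 0 < d) (hδ : 0 < δ) (hδ1 : δ < 1) :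
    ENNReal.ofReal ((8 * d * 2 ^ d : ℝ)⁻¹ * Real.log (Real.log (1 / δ)))
        * volume (ball (0 : EuclideanSpace ℝ (Fin d)) 1)
      ≤ ∫⁻ x in closedBall 0 1, ENNReal.ofReal (PsiFun x (HLMax (fDelta d δ) x).toReal) := by
  obtain ⟨n, hδn, hnδ⟩ := exists_pow_two_inv_le_lt hδ hδ1.le
  have hL : Real.log (Real.log (1 / δ)) ≤ harmonic n := by
    refine (log_log_one_div_le_log_add_one hδ hδ1 hnδ).trans ?_
    exact_mod_cast log_add_one_le_harmonic n
  calc _ ≤ ENNReal.ofReal ((8 * d * 2 ^ d : ℝ)⁻¹ * harmonic n)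
          * volume (ball (0 : EuclideanSpace ℝ (Fin d)) 1) := by gcongr
    _ = ∑ k ∈ Finset.range n, ENNReal.ofReal ((8 * d * 2 ^ d : ℝ)⁻¹ / (k + 1))
          * volume (ball (0 : EuclideanSpace ℝ (Fin d)) 1) := by
        rw [← Finset.sum_mul, sum_range_ofReal_div_add_one (by positivity)]
    _ ≤ ∑ k ∈ Finset.range n,
          ∫⁻ x in dyadicShell d k, ENNReal.ofReal (PsiFun x (HLMax (fDelta d δ) x).toReal) :=
        Finset.sum_le_sum fun k hk => le_setLIntegral_dyadicShell_psiFun_hlMax_fDelta hd hδ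
          (hδn.trans (inv_anti₀ (by positivity)
            (pow_le_pow_right₀ one_le_two (Finset.mem_range.1 hk))))
    _ ≤ _ := by
        rw [lintegral_closedBall_one_eq_add_sum_dyadicShell _ n]
        exact le_add_self

theorem lintegral_psiFun_hlMax_fDelta_le (hd : 0 < d) (hδ : 0 < δ) (hδ1 : δ ≤ 1)
    (hL : 1 ≤ Real.log (Real.log (1 / δ))) :
    ∫⁻ x in closedBall 0 1, ENNReal.ofReal (PsiFun x (HLMax (fDelta d δ) x).toReal)
      ≤ ENNReal.ofReal (7 * 4 ^ d * Real.log (Real.log (1 / δ)))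
        * volume (ball (0 : EuclideanSpace ℝ (Fin d)) 1) := by
  obtain ⟨n, hδn, hnδ⟩ := exists_pow_two_inv_le_lt hδ hδ1
  have hH := harmonic_le_three_mul_log_log_one_div hδ hL hδn
  have hH₀ : (0 : ℝ) ≤ harmonic n := by
    unfold harmonic
    positivity
  have h24 : (2 : ℝ) ^ d ≤ 4 ^ d := pow_le_pow_left₀ zero_le_two (by norm_num) d
  rw [lintegral_closedBall_one_eq_add_sum_dyadicShell _ n]
  calc _ ≤ ENNReal.ofReal (2 ^ d) * volume (ball (0 : EuclideanSpace ℝ (Fin d)) 1)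
          + ∑ k ∈ Finset.range n, ENNReal.ofReal (2 * 4 ^ d / (k + 1))
            * volume (ball (0 : EuclideanSpace ℝ (Fin d)) 1) :=
        add_le_add (setLIntegral_closedBall_psiFun_hlMax_fDelta_le hδ (by positivity) hnδ.le)
          (Finset.sum_le_sum fun k _ => setLIntegral_dyadicShell_psiFun_hlMax_fDelta_le hd hδ k)
    _ = ENNReal.ofReal (2 ^ d + 2 * 4 ^ d * harmonic n)
          * volume (ball (0 : EuclideanSpace ℝ (Fin d)) 1) := by
        rw [← Finset.sum_mul, sum_range_ofReal_div_add_one (by positivity), ← add_mul,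
          ENNReal.ofReal_add (by positivity) (by positivity)]
    _ ≤ _ := by
        gcongr
        nlinarith [pow_pos (four_pos : (0 : ℝ) < 4) d]

end Integrals

section LogLog

variable {d : ℕ} {δ : ℝ}

lemma logPlus_logPlus_inv_pow (hd : 0 < d) (hδ₁ : 1 ≤ Real.log (1 / δ)) :
    logPlus (logPlus (δ ^ d)⁻¹) = Real.log d + Real.log (Real.log (1 / δ)) := by
  have hd₁ : (1 : ℝ) ≤ d := by exact_mod_cast hd
  have hlog : Real.log (δ ^ d)⁻¹ = d * Real.log (1 / δ) := by
    rw [← inv_pow, Real.log_pow, one_div]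
  have hlog_pos : 1 ≤ d * Real.log (1 / δ) := by nlinarith
  have hinner : logPlus (δ ^ d)⁻¹ = d * Real.log (1 / δ) := by
    rw [logPlus, hlog, max_eq_left (by linarith)]
  rw [hinner, logPlus, Real.log_mul (by positivity) (by positivity), max_eq_left]
  linarith [Real.log_nonneg hd₁, Real.log_nonneg hδ₁]

theorem setLIntegral_closedBall_fDelta_logPlus_logPlus (hδ : 0 < δ) (hδ1 : δ ≤ 1) :
    ∫⁻ x in closedBall 0 1, ENNReal.ofReal (‖fDelta d δ x‖ * logPlus (logPlus ‖fDelta d δ x‖))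
      = ENNReal.ofReal (logPlus (logPlus (δ ^ d)⁻¹))
        * volume (ball (0 : EuclideanSpace ℝ (Fin d)) 1) := by
  rw [setLIntegral_comp_norm_fDelta_of_subset (fun u => ENNReal.ofReal (u * logPlus (logPlus u)))
      (by simp) hδ (ball_subset_closedBall.trans (closedBall_subset_closedBall hδ1)),
    ← ENNReal.ofReal_mul]
  · congr 2
    field_simp
  · exact mul_nonneg (by positivity) (le_max_right _ _)

end LogLog

/-- **Sharpness example.** For `f_δ = δ^{-d} χ_{{|x|<δ}}`, both
`∫_{B₀} |f_δ| log⁺log⁺|f_δ|` and `∫_{B₀} Ψ(x, M(f_δ)(x)) dx` are comparable to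
`log log (1/δ)`, uniformly in `δ ∈ (0, e^{-e})`. -/
theorem sharpness_example {d : ℕ} (hd : 0 < d) :
    ∃ c : ℝ, 0 < c ∧ ∃ C : ℝ, 0 < C ∧
      ∀ δ : ℝ, 0 < δ → δ < Real.exp (-(Real.exp 1)) →
        (ENNReal.ofReal (c * Real.log (Real.log (1 / δ))) ≤
            (∫⁻ x in Metric.closedBall (0 : EuclideanSpace ℝ (Fin d)) 1,
              ENNReal.ofReal (‖fDelta d δ x‖ * logPlus (logPlus ‖fDelta d δ x‖))) ∧
          (∫⁻ x in Metric.closedBall (0 : EuclideanSpace ℝ (Fin d)) 1,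
              ENNReal.ofReal (‖fDelta d δ x‖ * logPlus (logPlus ‖fDelta d δ x‖))) ≤
            ENNReal.ofReal (C * Real.log (Real.log (1 / δ)))) ∧
        (ENNReal.ofReal (c * Real.log (Real.log (1 / δ))) ≤
            (∫⁻ x in Metric.closedBall (0 : EuclideanSpace ℝ (Fin d)) 1,
              ENNReal.ofReal (PsiFun x ((HLMax (fDelta d δ) x).toReal))) ∧
          (∫⁻ x in Metric.closedBall (0 : EuclideanSpace ℝ (Fin d)) 1,
              ENNReal.ofReal (PsiFun x ((HLMax (fDelta d δ) x).toReal))) ≤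
            ENNReal.ofReal (C * Real.log (Real.log (1 / δ)))) := by
  set V := volume (ball (0 : EuclideanSpace ℝ (Fin d)) 1)
  have hV : 0 < V.toReal :=
    ENNReal.toReal_pos (measure_ball_pos _ _ one_pos).ne' measure_ball_lt_top.ne
  have hscale (a L : ℝ) : ENNReal.ofReal (a * V.toReal * L) = ENNReal.ofReal (a * L) * V := by
    rw [mul_right_comm, ENNReal.ofReal_mul' hV.le, ENNReal.ofReal_toReal measure_ball_lt_top.ne]
  refine ⟨(8 * d * 2 ^ d : ℝ)⁻¹ * V.toReal, by positivity, 7 * 4 ^ d * V.toReal, by positivity,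
    fun δ hδ hδe => ?_⟩
  have hδ1 : δ < 1 := hδe.trans (Real.exp_lt_one_iff.2 (by linarith [Real.exp_pos 1]))
  have hlog := exp_one_lt_log_one_div hδ hδe
  have hL : 1 < Real.log (Real.log (1 / δ)) :=
    (Real.lt_log_iff_exp_lt (by linarith [Real.exp_pos 1])).2 hlog
  have hd₁ : (1 : ℝ) ≤ d := by exact_mod_cast hd
  have h4d : 1 + (d : ℝ) * 3 ≤ 4 ^ d := by
    simpa [show (1 : ℝ) + 3 = 4 by norm_num] using one_add_mul_le_pow (by norm_num : (-2 : ℝ) ≤ 3) d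
  have hc : (8 * d * 2 ^ d : ℝ)⁻¹ ≤ 1 :=
    inv_le_one_of_one_le₀ (by nlinarith [one_le_pow₀ (M₀ := ℝ) one_le_two (n := d)])
  rw [setLIntegral_closedBall_fDelta_logPlus_logPlus hδ hδ1.le,
    logPlus_logPlus_inv_pow hd (by linarith [Real.add_one_le_exp 1]), hscale, hscale]
  refine ⟨⟨?_, ?_⟩, le_lintegral_psiFun_hlMax_fDelta hd hδ hδ1,
    lintegral_psiFun_hlMax_fDelta_le hd hδ hδ1.le hL.le⟩
  · gcongr
    nlinarith [Real.log_nonneg hd₁]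
  · gcongr
    nlinarith [Real.log_le_sub_one_of_pos (by positivity : (0 : ℝ) < d)]
end
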